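/- arXiv:2201.12746 — 2 statements merged into one kernel-verified Lean document; each statement's English description precedes it below -/
import Mathlib

section
/- Let M ≥ 1 be an integer and let 𝒟 be a probability distribution on ℕ supported on {0,1,…,M}. For every n ≥ 1 and every random variable X on {0,1}^n, with Y = RC_𝒟 X (channel randomness independent of X), one has I(X; TRIM Y) ≤ I(X; Y) ≤ I(X; TRIM Y) + 8 log₂(n+1) + 3 log₂(Mn+2). In particular |I(X; RC_𝒟 X) − I(X; TRC_𝒟 X)| = O(log n) uniformly in X when M is fixed. -/
/-!
Both inequalities are data processing inequalities for deterministic post-processing,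
`I(X; g(Y)) ≤ I(X; Y)`, i.e. `H(X | Y) ≤ H(X | g(Y))`. This follows from Gibbs' inequality,
comparing the law of `(X, Y)` with the law under which `X` and `Y` are conditionally independent
given `g(Y)`. For the upper bound, `Y` is recovered from `TRIM Y` together with the numbers of
leading and trailing zeros that were deleted, so `I(X; Y) ≤ I(X; TRIM Y) + H(lead, trail)`. Both
numbers are at most `|Y| ≤ Mn`, so this entropy is at most `2 log₂(Mn + 1)`. Everything reduces
to finite sums because the joint law of input and repetition counts lives on the finite set of
pairs `(x, ω)` with `ω ≤ M`.
-/
open MeasureTheory ProbabilityTheory Filter Real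
open scoped ENNReal NNReal

/-- Shannon entropy (in bits) of a discrete random variable `X`. -/
noncomputable def entropy {Ω S : Type*} [MeasurableSpace Ω] (μ : Measure Ω) (X : Ω → S) : ℝ :=
  ∑' s : S, -((μ (X ⁻¹' {s})).toReal * Real.logb 2 (μ (X ⁻¹' {s})).toReal)

/-- Mutual information (in bits) `I(X;Y) = H(X) + H(Y) - H(X,Y)`. -/
noncomputable def mutualInfo' {Ω S T : Type*} [MeasurableSpace Ω] (μ : Measure Ω)
    (X : Ω → S) (Y : Ω → T) : ℝ :=
  entropy μ X + entropy μ Y - entropy μ (fun ω => (X ω, Y ω))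

/-- Output of the `𝒟`-repeat channel on input `x` with repetition counts `ω`. -/
def repeatOut {n : ℕ} (x : Fin n → Bool) (ω : Fin n → ℕ) : List Bool :=
  (List.finRange n).flatMap fun i => List.replicate (ω i) (x i)

/-- TRIM: delete the maximal all-zero (`false`) prefix and suffix. -/
def trim (l : List Bool) : List Bool :=
  ((l.dropWhile (· == false)).reverse.dropWhile (· == false)).reverse

/-- The distribution of the channel randomness: i.i.d. repetition counts `ωᵢ ~ 𝒟`. -/
noncomputable def rcNoise (D : PMF ℕ) (n : ℕ) : Measure (Fin n → ℕ) :=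
  Measure.pi fun _ => D.toMeasure

/-- Joint distribution of `(X, ω)` when `X ~ p` is independent of the channel randomness. -/
noncomputable def rcJoint (D : PMF ℕ) {n : ℕ} (p : PMF (Fin n → Bool)) :
    Measure ((Fin n → Bool) × (Fin n → ℕ)) :=
  p.toMeasure.prod (rcNoise D n)

/-- `sup_X I(X; f(RC_𝒟 X))` over all input distributions on `{0,1}^n`
(`f = id` gives `RC_𝒟`, `f = trim` gives `TRC_𝒟`). -/
noncomputable def rcSup (D : PMF ℕ) (f : List Bool → List Bool) (n : ℕ) : ℝ :=
  ⨆ p : PMF (Fin n → Bool),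
    mutualInfo' (rcJoint D p) Prod.fst fun q => f (repeatOut q.1 q.2)

/-- `𝒟` has finite first and second moments. -/
def SquareIntegrableD (D : PMF ℕ) : Prop :=
  (∑' k : ℕ, (k : ℝ≥0∞) * D k) ≠ ⊤ ∧ (∑' k : ℕ, (k : ℝ≥0∞) ^ 2 * D k) ≠ ⊤

open Finset

theorem sum_mul_logb_le_sum_mul_logb {ι : Type*} (s : Finset ι) {p q : ι → ℝ}
    (hp : ∀ i ∈ s, 0 ≤ p i) (hq : ∀ i ∈ s, 0 ≤ q i) (hpq : ∀ i ∈ s, 0 < p i → 0 < q i)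
    (hp1 : ∑ i ∈ s, p i = 1) (hq1 : ∑ i ∈ s, q i ≤ 1) :
    ∑ i ∈ s, p i * logb 2 (q i) ≤ ∑ i ∈ s, p i * logb 2 (p i) := by
  have hlog2 : 0 < Real.log 2 := Real.log_pos one_lt_two
  have term : ∀ i ∈ s, p i * logb 2 (q i) - p i * logb 2 (p i) ≤ (q i - p i) / Real.log 2 := by
    intro i hi
    rcases (hp i hi).eq_or_lt with h0 | h0
    · simpa [← h0] using div_nonneg (hq i hi) hlog2.le
    · have hqi := hpq i hi h0
      rw [← mul_sub, logb, logb, ← sub_div, ← Real.log_div hqi.ne' h0.ne', ← mul_div_assoc,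
        div_le_div_iff_of_pos_right hlog2]
      calc p i * Real.log (q i / p i) ≤ p i * (q i / p i - 1) :=
            mul_le_mul_of_nonneg_left (Real.log_le_sub_one_of_pos (by positivity)) h0.le
        _ = q i - p i := by field_simp
  have hsum : ∑ i ∈ s, (q i - p i) / Real.log 2 ≤ 0 := by
    rw [← sum_div, sum_sub_distrib, hp1]
    exact div_nonpos_of_nonpos_of_nonneg (by linarith) hlog2.le
  linarith [sum_le_sum term, sum_sub_distrib (s := s) (f := fun i => p i * logb 2 (q i))
    (g := fun i => p i * logb 2 (p i))]

noncomputable def condEntropy {Ω S T : Type*} [MeasurableSpace Ω] (μ : Measure Ω)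
    (X : Ω → S) (Y : Ω → T) : ℝ :=
  entropy μ (fun ω => (X ω, Y ω)) - entropy μ Y

section Entropy

variable {Ω S T U R : Type*} [MeasurableSpace Ω] {μ : Measure Ω} {G : Finset Ω}

theorem entropy_comp_of_injective (X : Ω → S) {e : S → T} (he : e.Injective) :
    entropy μ (e ∘ X) = entropy μ X := by
  unfold entropy
  rw [← he.tsum_eq]
  · simp only [Set.preimage_comp, ← Set.image_singleton, he.preimage_image]
  · rintro u hu
    by_contra hr
    have : e ∘ X ⁻¹' {u} = ∅ := by
      ext ω; simpa using fun h : e (X ω) = u => hr ⟨X ω, h⟩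
    simp [this] at hu

theorem entropy_const [IsProbabilityMeasure μ] (c : S) : entropy μ (fun _ : Ω => c) = 0 := by
  unfold entropy
  convert tsum_zero with s
  classical
  rw [Set.preimage_const]
  split_ifs <;> simp

open scoped Classical in
theorem measureReal_eq_sum_of_compl_null [MeasurableSingletonClass Ω] [IsFiniteMeasure μ]
    (hG : μ (↑G)ᶜ = 0) (A : Set Ω) : μ.real A = ∑ a ∈ G with a ∈ A, μ.real {a} := by
  rw [sum_measureReal_singleton, measureReal_def, measureReal_def, ← measure_inter_conull hG]
  congr 2
  ext a; simp [and_comm]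

theorem sum_measureReal_singleton_eq_one [MeasurableSingletonClass Ω] [IsProbabilityMeasure μ]
    (hG : μ (↑G)ᶜ = 0) : ∑ a ∈ G, μ.real {a} = 1 := by
  rw [sum_measureReal_singleton, measureReal_def,
    (prob_compl_eq_zero_iff G.measurableSet).1 hG, ENNReal.toReal_one]

theorem sum_measureReal_preimage_mul [MeasurableSingletonClass Ω] [IsFiniteMeasure μ]
    (hG : μ (↑G)ᶜ = 0) {X : Ω → S} {t : Finset S} (ht : ∀ a ∈ G, X a ∈ t) (h : S → ℝ) :
    ∑ s ∈ t, μ.real (X ⁻¹' {s}) * h s = ∑ a ∈ G, μ.real {a} * h (X a) := by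
  classical
  rw [← sum_fiberwise_of_maps_to ht]
  refine sum_congr rfl fun s _ => ?_
  rw [measureReal_eq_sum_of_compl_null hG, sum_mul]
  exact sum_congr rfl fun a ha => by rw [(mem_filter.1 ha).2]

theorem entropy_eq_neg_sum (hG : μ (↑G)ᶜ = 0) {X : Ω → S} {t : Finset S}
    (ht : ∀ a ∈ G, X a ∈ t) :
    entropy μ X = -∑ s ∈ t, μ.real (X ⁻¹' {s}) * logb 2 (μ.real (X ⁻¹' {s})) := by
  rw [entropy, tsum_eq_sum, sum_neg_distrib]
  · rfl
  intro s hs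
  have hsub : X ⁻¹' {s} ⊆ (↑G)ᶜ := fun a (ha : X a = s) haG => hs (ha ▸ ht a haG)
  have hnull : μ (X ⁻¹' {s}) = 0 := measure_mono_null hsub hG
  simp [hnull]

theorem entropy_eq_neg_sum_singleton [MeasurableSingletonClass Ω] [IsFiniteMeasure μ]
    (hG : μ (↑G)ᶜ = 0) (X : Ω → S) :
    entropy μ X = -∑ a ∈ G, μ.real {a} * logb 2 (μ.real (X ⁻¹' {X a})) := by
  classical
  have ht : ∀ a ∈ G, X a ∈ G.image X := fun a ha => mem_image_of_mem X ha
  rw [entropy_eq_neg_sum hG ht, sum_measureReal_preimage_mul hG ht]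

theorem sum_measureReal_preimage_prodMk_le [DiscreteMeasurableSpace Ω] [IsFiniteMeasure μ]
    (X : Ω → S) (Z : Ω → T) (s : Finset S) (u : T) :
    ∑ x ∈ s, μ.real ((fun ω => (X ω, Z ω)) ⁻¹' {(x, u)}) ≤ μ.real (Z ⁻¹' {u}) := by
  classical
  calc ∑ x ∈ s, μ.real ((fun ω => (X ω, Z ω)) ⁻¹' {(x, u)})
      = ∑ b ∈ s.image (·, u), μ.real ((fun ω => (X ω, Z ω)) ⁻¹' {b}) :=
        by rw [sum_image fun x _ y _ h => (Prod.ext_iff.1 h).1]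
    _ = μ.real ((fun ω => (X ω, Z ω)) ⁻¹' ↑(s.image (·, u))) :=
        sum_measureReal_preimage_singleton _ fun _ _ => .of_discrete
    _ ≤ μ.real (Z ⁻¹' {u}) := measureReal_mono fun ω hω => by aesop

theorem sum_measureReal_preimage_eq_one [MeasurableSingletonClass Ω] [IsProbabilityMeasure μ]
    (hG : μ (↑G)ᶜ = 0) {X : Ω → S} {t : Finset S} (ht : ∀ a ∈ G, X a ∈ t) :
    ∑ s ∈ t, μ.real (X ⁻¹' {s}) = 1 := by
  simpa using (sum_measureReal_preimage_mul hG ht fun _ => 1).trans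
    (by simpa using sum_measureReal_singleton_eq_one hG)

theorem sum_condIndepLaw_le_one [DiscreteMeasurableSpace Ω] [IsProbabilityMeasure μ]
    (hG : μ (↑G)ᶜ = 0) (X : Ω → S) {Y : Ω → T} (g : T → U) {s : Finset S} {t : Finset T}
    (ht : ∀ a ∈ G, Y a ∈ t) :
    ∑ b ∈ s ×ˢ t, μ.real (Y ⁻¹' {b.2}) *
      μ.real ((fun ω => (X ω, g (Y ω))) ⁻¹' {(b.1, g b.2)}) / μ.real ((g ∘ Y) ⁻¹' {g b.2}) ≤ 1 := by
  rw [sum_product_right]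
  refine (sum_le_sum fun y _ => ?_).trans_eq (sum_measureReal_preimage_eq_one hG ht)
  simp only [mul_div_assoc, ← mul_sum, ← sum_div]
  exact mul_le_of_le_one_right measureReal_nonneg <| div_le_one_of_le₀
    (sum_measureReal_preimage_prodMk_le X (g ∘ Y) _ _) measureReal_nonneg

theorem condEntropy_le_condEntropy_comp [DiscreteMeasurableSpace Ω] [IsProbabilityMeasure μ]
    (hG : μ (↑G)ᶜ = 0) (X : Ω → S) (Y : Ω → T) (g : T → U) :
    condEntropy μ X Y ≤ condEntropy μ X (g ∘ Y) := by
  classical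
  set P := fun ω => (X ω, Y ω)
  set W := fun ω => (X ω, (g ∘ Y) ω)
  set sP := G.image X ×ˢ G.image Y
  have hP : ∀ a ∈ G, P a ∈ sP := fun a ha =>
    mem_product.2 ⟨mem_image_of_mem X ha, mem_image_of_mem Y ha⟩
  -- the law of `(X, Y)` when `X` and `Y` are conditionally independent given `g ∘ Y`
  set q : S × T → ℝ := fun b => μ.real (Y ⁻¹' {b.2}) * μ.real (W ⁻¹' {(b.1, g b.2)}) /
    μ.real ((g ∘ Y) ⁻¹' {g b.2})
  have hpos : ∀ b, 0 < μ.real (P ⁻¹' {b}) → 0 < μ.real (Y ⁻¹' {b.2}) ∧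
      0 < μ.real (W ⁻¹' {(b.1, g b.2)}) ∧ 0 < μ.real ((g ∘ Y) ⁻¹' {g b.2}) := by
    intro b hb
    have hY : 0 < μ.real (Y ⁻¹' {b.2}) :=
      hb.trans_le (measureReal_mono fun ω (h : P ω = b) => by simp [← h, P])
    exact ⟨hY, hb.trans_le (measureReal_mono fun ω (h : P ω = b) => by simp [← h, P, W]),
      hY.trans_le (measureReal_mono fun ω (h : Y ω = b.2) => by simp [← h])⟩
  have gibbs := sum_mul_logb_le_sum_mul_logb sP (q := q) (fun _ _ => measureReal_nonneg)
    (fun _ _ => by positivity) (fun b _ hb => by obtain ⟨h1, h2, h3⟩ := hpos b hb; positivity)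
    (sum_measureReal_preimage_eq_one hG hP)
    (sum_condIndepLaw_le_one hG X g fun a ha => mem_image_of_mem Y ha)
  have hsplit : ∀ b ∈ sP, μ.real (P ⁻¹' {b}) * logb 2 (q b) = μ.real (P ⁻¹' {b}) *
      (logb 2 (μ.real (Y ⁻¹' {b.2})) + logb 2 (μ.real (W ⁻¹' {(b.1, g b.2)})) -
        logb 2 (μ.real ((g ∘ Y) ⁻¹' {g b.2}))) := by
    intro b _
    rcases (measureReal_nonneg (μ := μ) (s := P ⁻¹' {b})).eq_or_lt with h | h
    · simp [← h]
    obtain ⟨h1, h2, h3⟩ := hpos b h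
    rw [logb_div (by positivity) h3.ne', logb_mul h1.ne' h2.ne']
  rw [sum_congr rfl hsplit, sum_measureReal_preimage_mul hG hP,
    sum_measureReal_preimage_mul hG hP] at gibbs
  simp only [mul_add, mul_sub, sum_add_distrib, sum_sub_distrib] at gibbs
  unfold condEntropy
  rw [entropy_eq_neg_sum_singleton hG P, entropy_eq_neg_sum_singleton hG Y,
    entropy_eq_neg_sum_singleton hG W, entropy_eq_neg_sum_singleton hG (g ∘ Y)]
  simp only [P, W, Function.comp_apply] at gibbs ⊢
  linarith

theorem entropy_comp_le [DiscreteMeasurableSpace Ω] [IsProbabilityMeasure μ]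
    (hG : μ (↑G)ᶜ = 0) (X : Ω → S) (g : S → T) : entropy μ (g ∘ X) ≤ entropy μ X := by
  have h := condEntropy_le_condEntropy_comp hG X X g
  have hdiag : entropy μ (fun ω => (X ω, X ω)) = entropy μ X :=
    entropy_comp_of_injective X (e := fun s => (s, s)) fun _ _ h => (Prod.ext_iff.1 h).1
  have hgraph : entropy μ (fun ω => (X ω, (g ∘ X) ω)) = entropy μ X :=
    entropy_comp_of_injective X (e := fun s => (s, g s)) fun _ _ h => (Prod.ext_iff.1 h).1
  unfold condEntropy at h
  linarith

theorem entropy_pair_le [DiscreteMeasurableSpace Ω] [IsProbabilityMeasure μ]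
    (hG : μ (↑G)ᶜ = 0) (X : Ω → S) (Y : Ω → T) :
    entropy μ (fun ω => (X ω, Y ω)) ≤ entropy μ X + entropy μ Y := by
  have h := condEntropy_le_condEntropy_comp hG X Y fun _ => ()
  have hX : entropy μ (fun ω => (X ω, ())) = entropy μ X :=
    entropy_comp_of_injective X (e := fun s => (s, ())) fun _ _ h => (Prod.ext_iff.1 h).1
  have hconst : entropy μ (fun _ : Ω => ()) = 0 := entropy_const ()
  unfold condEntropy at h
  simp only [Function.comp_def] at h
  linarith

theorem mutualInfo'_eq_entropy_sub_condEntropy (X : Ω → S) (Y : Ω → T) :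
    mutualInfo' μ X Y = entropy μ X - condEntropy μ X Y := by
  unfold mutualInfo' condEntropy; ring

theorem mutualInfo'_comp_le [DiscreteMeasurableSpace Ω] [IsProbabilityMeasure μ]
    (hG : μ (↑G)ᶜ = 0) (X : Ω → S) (Y : Ω → T) (g : T → U) :
    mutualInfo' μ X (g ∘ Y) ≤ mutualInfo' μ X Y := by
  rw [mutualInfo'_eq_entropy_sub_condEntropy, mutualInfo'_eq_entropy_sub_condEntropy]
  linarith [condEntropy_le_condEntropy_comp hG X Y g]

theorem mutualInfo'_le_mutualInfo'_add_entropy [DiscreteMeasurableSpace Ω]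
    [IsProbabilityMeasure μ] (hG : μ (↑G)ᶜ = 0) (X : Ω → S) {Y : Ω → T} (Y' : Ω → U)
    (Z : Ω → R) (f : U × R → T) (hY : ∀ ω, Y ω = f (Y' ω, Z ω)) :
    mutualInfo' μ X Y ≤ mutualInfo' μ X Y' + entropy μ Z := by
  obtain rfl : Y = f ∘ fun ω => (Y' ω, Z ω) := funext hY
  have hYZ := entropy_pair_le hG Y' Z
  have hXY' : entropy μ (fun ω => (X ω, Y' ω)) ≤ entropy μ (fun ω => (X ω, Y' ω, Z ω)) :=
    entropy_comp_le hG (fun ω => (X ω, Y' ω, Z ω)) fun b => (b.1, b.2.1)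
  calc mutualInfo' μ X (f ∘ fun ω => (Y' ω, Z ω))
      ≤ mutualInfo' μ X (fun ω => (Y' ω, Z ω)) := mutualInfo'_comp_le hG _ _ f
    _ ≤ mutualInfo' μ X Y' + entropy μ Z := by unfold mutualInfo'; linarith

theorem entropy_le_logb_card [MeasurableSingletonClass Ω] [IsProbabilityMeasure μ]
    (hG : μ (↑G)ᶜ = 0) {X : Ω → S} {t : Finset S} (ht : ∀ a ∈ G, X a ∈ t) :
    entropy μ X ≤ logb 2 t.card := by
  rcases t.eq_empty_or_nonempty with rfl | hne
  · simp [entropy_eq_neg_sum hG ht]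
  have hcard : (0 : ℝ) < t.card := by exact_mod_cast hne.card_pos
  have gibbs := sum_mul_logb_le_sum_mul_logb t (q := fun _ => (t.card : ℝ)⁻¹)
    (fun _ _ => measureReal_nonneg) (fun _ _ => by positivity) (fun _ _ _ => by positivity)
    (sum_measureReal_preimage_eq_one hG ht) (by simp [hcard.ne'])
  rw [← sum_mul, sum_measureReal_preimage_eq_one hG ht, logb_inv] at gibbs
  rw [entropy_eq_neg_sum hG ht]
  linarith

end Entropy

section Trim

def leadingFalses (l : List Bool) : ℕ := (l.takeWhile (· == false)).length

-- counted after the leading run is removed, so the `false`s of an all-`false` list count once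
def trailingFalses (l : List Bool) : ℕ := leadingFalses (l.dropWhile (· == false)).reverse

theorem replicate_leadingFalses_append_dropWhile (l : List Bool) :
    List.replicate (leadingFalses l) false ++ l.dropWhile (· == false) = l := by
  conv_rhs => rw [← List.takeWhile_append_dropWhile (p := (· == false)) (l := l)]
  congr 1
  exact (List.eq_replicate_iff.2 ⟨rfl, fun b hb => by simpa using List.mem_takeWhile_imp hb⟩).symm

theorem replicate_append_trim_append_replicate (l : List Bool) :
    List.replicate (leadingFalses l) false ++ trim l ++
      List.replicate (trailingFalses l) false = l := by
  have hsuffix := congrArg List.reverse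
    (replicate_leadingFalses_append_dropWhile (l.dropWhile (· == false)).reverse)
  rw [List.reverse_append, List.reverse_replicate, List.reverse_reverse] at hsuffix
  rw [trim, List.append_assoc, trailingFalses, hsuffix, replicate_leadingFalses_append_dropWhile]

theorem leadingFalses_add_trailingFalses_le (l : List Bool) :
    leadingFalses l + trailingFalses l ≤ l.length := by
  have h := congrArg List.length (replicate_append_trim_append_replicate l)
  simp only [List.length_append, List.length_replicate] at h
  omega

end Trim

section RepeatChannel

variable {n : ℕ}

theorem length_repeatOut (x : Fin n → Bool) (ω : Fin n → ℕ) :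
    (repeatOut x ω).length = ∑ i, ω i := by
  simp [repeatOut, List.length_flatMap, Fin.sum_univ_def]

instance (D : PMF ℕ) (p : PMF (Fin n → Bool)) : IsProbabilityMeasure (rcJoint D p) := by
  unfold rcJoint rcNoise; infer_instance

def rcSupport (M n : ℕ) : Finset ((Fin n → Bool) × (Fin n → ℕ)) :=
  univ ×ˢ Fintype.piFinset fun _ => range (M + 1)

theorem rcJoint_compl_rcSupport {M : ℕ} {D : PMF ℕ} (hsupp : ∀ k : ℕ, M < k → D k = 0)
    (p : PMF (Fin n → Bool)) :
    rcJoint D p (↑(rcSupport M n))ᶜ = 0 := by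
  have hD : D.toMeasure {k | M < k} = 0 :=
    (PMF.toMeasure_apply_eq_zero_iff D .of_discrete).2 <| Set.disjoint_left.2
      fun k hk hMk => (PMF.mem_support_iff D k).1 hk (hsupp k hMk)
  have hnoise : rcNoise D n (⋃ i, Function.eval i ⁻¹' {k | M < k}) = 0 :=
    measure_iUnion_null fun i => Measure.pi_eval_preimage_null _ hD
  have hprod : rcJoint D p (Set.univ ×ˢ ⋃ i, Function.eval i ⁻¹' {k | M < k}) = 0 := by
    rw [rcJoint, Measure.prod_prod, hnoise, mul_zero]
  refine measure_mono_null (fun q hq => ?_) hprod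
  simpa [rcSupport] using hq

theorem length_repeatOut_le {M : ℕ} {q : (Fin n → Bool) × (Fin n → ℕ)}
    (hq : q ∈ rcSupport M n) : (repeatOut q.1 q.2).length ≤ M * n := by
  simp only [rcSupport, mem_product, mem_univ, Fintype.mem_piFinset, mem_range, true_and] at hq
  rw [length_repeatOut]
  simpa [mul_comm] using sum_le_sum fun i (_ : i ∈ univ) => Nat.lt_succ_iff.1 (hq i)

end RepeatChannel

theorem trimming_mutual_information_log_bound_general
    (M : ℕ) (D : PMF ℕ) (hsupp : ∀ k : ℕ, M < k → D k = 0)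
    (n : ℕ) (p : PMF (Fin n → Bool)) :
    mutualInfo' (rcJoint D p) Prod.fst (fun q => trim (repeatOut q.1 q.2)) ≤
      mutualInfo' (rcJoint D p) Prod.fst (fun q => repeatOut q.1 q.2) ∧
    mutualInfo' (rcJoint D p) Prod.fst (fun q => repeatOut q.1 q.2) ≤
      mutualInfo' (rcJoint D p) Prod.fst (fun q => trim (repeatOut q.1 q.2))
        + 8 * Real.logb 2 (n + 1) + 3 * Real.logb 2 (M * n + 2) := by
  have hG := rcJoint_compl_rcSupport hsupp p
  refine ⟨mutualInfo'_comp_le hG Prod.fst (fun q => repeatOut q.1 q.2) trim, ?_⟩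
  have hZ : ∀ q ∈ rcSupport M n,
      (leadingFalses (repeatOut q.1 q.2), trailingFalses (repeatOut q.1 q.2)) ∈
        range (M * n + 1) ×ˢ range (M * n + 1) := by
    intro q hq
    have := leadingFalses_add_trailingFalses_le (repeatOut q.1 q.2)
    have := length_repeatOut_le hq
    simp only [mem_product, mem_range]
    omega
  have hlog : 0 ≤ logb 2 ((n : ℝ) + 1) := logb_nonneg one_lt_two (by simp)
  have hlog' : logb 2 ((M : ℝ) * n + 1) ≤ logb 2 (M * n + 2) :=
    logb_le_logb_of_le one_lt_two (by positivity) (by linarith)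
  have hlog'' : 0 ≤ logb 2 ((M : ℝ) * n + 1) := logb_nonneg one_lt_two (by simp; positivity)
  calc mutualInfo' (rcJoint D p) Prod.fst (fun q => repeatOut q.1 q.2)
      ≤ mutualInfo' (rcJoint D p) Prod.fst (fun q => trim (repeatOut q.1 q.2)) +
          entropy (rcJoint D p) fun q =>
            (leadingFalses (repeatOut q.1 q.2), trailingFalses (repeatOut q.1 q.2)) :=
        mutualInfo'_le_mutualInfo'_add_entropy hG _ _ _
          (fun z => List.replicate z.2.1 false ++ z.1 ++ List.replicate z.2.2 false)
          fun q => (replicate_append_trim_append_replicate _).symm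
    _ ≤ mutualInfo' (rcJoint D p) Prod.fst (fun q => trim (repeatOut q.1 q.2)) +
          logb 2 ((M * n + 1) * (M * n + 1)) := by
        grw [entropy_le_logb_card hG hZ]
        simp
    _ ≤ _ := by
        rw [logb_mul (by positivity) (by positivity)]
        linarith

/-- If `𝒟` is supported on `{0,…,M}` with `M ≥ 1`, then for every `n ≥ 1`
and every input distribution `p` on `{0,1}^n` (channel randomness independent of the input),
with `Y = RC_𝒟 X`:
`I(X; TRIM Y) ≤ I(X; Y) ≤ I(X; TRIM Y) + 8 log₂(n+1) + 3 log₂(Mn+2)`. -/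
theorem trimming_mutual_information_log_bound
    (M : ℕ) (hM : 1 ≤ M) (D : PMF ℕ) (hsupp : ∀ k : ℕ, M < k → D k = 0)
    (n : ℕ) (hn : 1 ≤ n) (p : PMF (Fin n → Bool)) :
    mutualInfo' (rcJoint D p) Prod.fst (fun q => trim (repeatOut q.1 q.2)) ≤
      mutualInfo' (rcJoint D p) Prod.fst (fun q => repeatOut q.1 q.2) ∧
    mutualInfo' (rcJoint D p) Prod.fst (fun q => repeatOut q.1 q.2) ≤
      mutualInfo' (rcJoint D p) Prod.fst (fun q => trim (repeatOut q.1 q.2))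
        + 8 * Real.logb 2 (n + 1) + 3 * Real.logb 2 (M * n + 2) :=
  trimming_mutual_information_log_bound_general M D hsupp n p
end

section
/- Let (X_j)_{j≥1} be a sequence of {0,1}-valued random variables that is stationary, i.e. (X_1,…,X_N) has the same joint distribution as (X_{j+1},…,X_{j+N}) for all j, N, and suppose that (1/t)∑_{j=1}^{t} X_j → p almost surely as t → ∞, for some p ∈ (0,1). Then for every ζ ∈ (0, 1/3) there exists γ ∈ (0, 1/2) such that, writing L_n = ⌊3ζn⌋, lim_{n→∞} P( for every i with 1 ≤ i ≤ n − L_n : γ·L_n ≤ ∑_{j=i}^{i+L_n−1} X_j ≤ (1−γ)·L_n ) = 1. That is, with probability tending to 1, every window of length L_n in (X_1,…,X_n) has an approximately balanced number of zeros and ones. -/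
open MeasureTheory Filter

/-!
On the almost sure event where `S_t / t → p` (with `S_t` the partial sums), `S_t - p t = o(t)`
uniformly over `t ≤ n`, so every window sum `S_{i+L-1} - S_{i-1}` of length `L ≥ ζ n` lies
within `o(L)` of `p L`, and is therefore balanced for any `γ < min p (1 - p)` once `n` is large.
Almost sure eventual membership in the events then forces their probabilities to tend to `1`.
-/

open Finset in
theorem eventually_forall_le_abs_le_mul {g : ℕ → ℝ}
    (hg : Tendsto (fun t : ℕ => g t / t) atTop (nhds 0)) {ε : ℝ} (hε : 0 < ε) :
    ∀ᶠ n : ℕ in atTop, ∀ t ≤ n, |g t| ≤ ε * n := by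
  obtain ⟨N, hN⟩ := Metric.tendsto_atTop.mp hg ε hε
  have hlin : Tendsto (fun n : ℕ => ε * n) atTop atTop :=
    tendsto_natCast_atTop_atTop.const_mul_atTop hε
  filter_upwards [hlin.eventually_ge_atTop (∑ t ∈ range (N + 1), |g t|)] with n hn t htn
  rcases le_or_gt t N with htN | htN
  · calc |g t| ≤ ∑ t ∈ range (N + 1), |g t| :=
          single_le_sum (f := fun t => |g t|) (fun _ _ => abs_nonneg _)
            (mem_range.mpr (Nat.lt_succ_of_le htN))
      _ ≤ ε * n := hn
  · have ht : (0 : ℝ) < t := by exact_mod_cast (N.zero_le.trans_lt htN)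
    have hsmall := hN t htN.le
    rw [Real.dist_eq, sub_zero, abs_div, Nat.abs_cast, div_lt_iff₀ ht] at hsmall
    calc |g t| ≤ ε * t := hsmall.le
      _ ≤ ε * n := by gcongr

theorem Finset.sum_Ico_add_one_eq_sum_Icc_sub {M : Type*} [AddCommGroup M] (a : ℕ → M)
    (k L : ℕ) :
    ∑ j ∈ Ico (k + 1) (k + 1 + L), a j = ∑ j ∈ Icc 1 (k + L), a j - ∑ j ∈ Icc 1 k, a j := by
  rw [eq_sub_iff_add_eq', ← Ico_add_one_right_eq_Icc, ← Ico_add_one_right_eq_Icc,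
    sum_Ico_consecutive _ (by omega) (by omega), show k + L + 1 = k + 1 + L by omega]

theorem eventually_nat_mul_le_floor_mul {b c : ℝ} (hb : 0 ≤ b) (hc : c < b) :
    ∀ᶠ n : ℕ in atTop, c * n ≤ ⌊b * n⌋₊ := by
  have h := (tendsto_nat_floor_mul_div_atTop hb).comp tendsto_natCast_atTop_atTop
  filter_upwards [h.eventually (lt_mem_nhds hc), eventually_gt_atTop 0] with n hn hn0
  have hn0' : (0 : ℝ) < n := by exact_mod_cast hn0
  simp only [Function.comp_apply] at hn
  exact ((lt_div_iff₀ hn0').mp hn).le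

section WindowSums

variable {a : ℕ → ℝ} {p : ℝ}
  (ha : Tendsto (fun t : ℕ => (∑ j ∈ Finset.Icc 1 t, a j) / t) atTop (nhds p))
  {L : ℕ → ℕ} {c : ℝ} (hc : 0 < c) (hL : ∀ᶠ n : ℕ in atTop, c * n ≤ L n)
include ha hc hL

theorem eventually_abs_window_sum_sub_le {δ : ℝ} (hδ : 0 < δ) :
    ∀ᶠ n : ℕ in atTop, ∀ k, k + L n ≤ n →
      |∑ j ∈ Finset.Ico (k + 1) (k + 1 + L n), a j - p * L n| ≤ δ * L n := by
  set D : ℕ → ℝ := fun t => ∑ j ∈ Finset.Icc 1 t, a j - p * t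
  have hD : Tendsto (fun t : ℕ => D t / t) atTop (nhds 0) := by
    rw [← sub_self p]
    refine (ha.sub_const p).congr' ?_
    filter_upwards [eventually_gt_atTop 0] with t ht
    have : (t : ℝ) ≠ 0 := by positivity
    simp only [D]
    field_simp
  filter_upwards [eventually_forall_le_abs_le_mul hD (half_pos (mul_pos hδ hc)), hL]
    with n hDn hLn k hk
  calc |∑ j ∈ Finset.Ico (k + 1) (k + 1 + L n), a j - p * L n| = |D (k + L n) - D k| := by
        rw [Finset.sum_Ico_add_one_eq_sum_Icc_sub]; simp only [D]; push_cast; ring_nf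
    _ ≤ |D (k + L n)| + |D k| := abs_sub _ _
    _ ≤ δ * c / 2 * n + δ * c / 2 * n := add_le_add (hDn _ hk) (hDn _ (by omega))
    _ = δ * (c * n) := by ring
    _ ≤ δ * L n := by gcongr

theorem eventually_window_sums_balanced {γ : ℝ} (hγp : γ < p) (hγq : γ < 1 - p) :
    ∀ᶠ n : ℕ in atTop, ∀ i : ℕ, 1 ≤ i → i ≤ n - L n →
      γ * L n ≤ ∑ j ∈ Finset.Ico i (i + L n), a j ∧
        ∑ j ∈ Finset.Ico i (i + L n), a j ≤ (1 - γ) * L n := by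
  set δ := min (p - γ) (1 - p - γ)
  filter_upwards [eventually_abs_window_sum_sub_le ha hc hL (δ := δ)
    (lt_min (by linarith) (by linarith))] with n hn i hi hin
  obtain ⟨k, rfl⟩ := Nat.exists_eq_add_of_le' hi
  obtain ⟨hlow, hupp⟩ := abs_le.mp (hn k (by omega))
  have hδp : δ * L n ≤ (p - γ) * L n := by gcongr; exact min_le_left _ _
  have hδq : δ * L n ≤ (1 - p - γ) * L n := by gcongr; exact min_le_right _ _
  constructor <;> linarith

end WindowSums

/-- The events `E n` need not be measurable: `tendsto_measure_iUnion_atTop` holds for any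
monotone family of sets. -/
theorem tendsto_measure_toReal_of_ae_eventually_mem {Ω : Type*} [MeasurableSpace Ω]
    {μ : Measure Ω} [IsProbabilityMeasure μ] {E : ℕ → Set Ω}
    (hE : ∀ᵐ ω ∂μ, ∀ᶠ n in atTop, ω ∈ E n) :
    Tendsto (fun n => (μ (E n)).toReal) atTop (nhds 1) := by
  set G : ℕ → Set Ω := fun n => {ω | ∀ m ≥ n, ω ∈ E m}
  have hG : Monotone G := fun n n' hn ω hω m hm => hω m (hn.trans hm)
  have hunion : μ (⋃ n, G n) = 1 := by
    have hae : ∀ᵐ ω ∂μ, ω ∈ ⋃ n, G n := by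
      filter_upwards [hE] with ω hω
      simpa [G, eventually_atTop] using hω
    rw [measure_congr (ae_eq_univ (s := ⋃ n, G n).mpr hae), measure_univ]
  have hlim : Tendsto (fun n => μ (E n)) atTop (nhds 1) := by
    exact tendsto_of_tendsto_of_tendsto_of_le_of_le (hunion ▸ tendsto_measure_iUnion_atTop hG)
      tendsto_const_nhds (fun n => measure_mono fun ω (hω : ω ∈ G n) => hω n le_rfl)
      fun _ => prob_le_one
  have := (ENNReal.tendsto_toReal ENNReal.one_ne_top).comp hlim
  rwa [ENNReal.toReal_one] at this

theorem stationary_process_balanced_windows_general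
    {Ω : Type*} [MeasurableSpace Ω] (μ : Measure Ω) [IsProbabilityMeasure μ]
    (X : ℕ → Ω → Bool)
    (p : ℝ) (hp : p ∈ Set.Ioo (0 : ℝ) 1)
    (hbirkhoff : ∀ᵐ ω ∂μ, Filter.Tendsto
      (fun t : ℕ => (∑ j ∈ Finset.Icc 1 t, (if X j ω then (1 : ℝ) else 0)) / t)
      Filter.atTop (nhds p))
    (ζ : ℝ) (hζ : ζ ∈ Set.Ioo (0 : ℝ) (1/3)) :
    ∃ γ ∈ Set.Ioo (0 : ℝ) (1/2),
      Filter.Tendsto (fun n : ℕ =>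
        (μ {ω | ∀ i : ℕ, 1 ≤ i → i ≤ n - ⌊3 * ζ * n⌋₊ →
          γ * ⌊3 * ζ * n⌋₊ ≤
              (∑ j ∈ Finset.Ico i (i + ⌊3 * ζ * n⌋₊), (if X j ω then (1 : ℝ) else 0)) ∧
          (∑ j ∈ Finset.Ico i (i + ⌊3 * ζ * n⌋₊), (if X j ω then (1 : ℝ) else 0)) ≤
              (1 - γ) * ⌊3 * ζ * n⌋₊}).toReal)
        Filter.atTop (nhds 1) := by
  obtain ⟨hp0, hp1⟩ := hp
  have hmin : 0 < min p (1 - p) := lt_min hp0 (by linarith)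
  have hγp : min p (1 - p) / 2 < p := by linarith [min_le_left p (1 - p)]
  have hγq : min p (1 - p) / 2 < 1 - p := by linarith [min_le_right p (1 - p)]
  refine ⟨min p (1 - p) / 2, ⟨by positivity, by linarith⟩, ?_⟩
  have hL : ∀ᶠ n : ℕ in atTop, ζ * n ≤ ⌊3 * ζ * n⌋₊ :=
    eventually_nat_mul_le_floor_mul (by linarith [hζ.1]) (by linarith [hζ.1])
  refine tendsto_measure_toReal_of_ae_eventually_mem ?_
  filter_upwards [hbirkhoff] with ω hω
  exact eventually_window_sums_balanced hω hζ.1 hL hγp hγq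

/-- Let `(X_j)_{j≥1}` be a stationary `{0,1}`-valued process whose empirical
averages `(1/t)∑_{j=1}^t X_j` converge a.s. to some `p ∈ (0,1)`. Then for every `ζ ∈ (0,1/3)`
there is `γ ∈ (0,1/2)` such that, with `L_n = ⌊3ζn⌋`, the probability that every window
`X_i,…,X_{i+L_n-1}` with `1 ≤ i ≤ n - L_n` has between `γL_n` and `(1-γ)L_n` ones tends
to `1`. -/
theorem stationary_process_balanced_windows
    {Ω : Type*} [MeasurableSpace Ω] (μ : Measure Ω) [IsProbabilityMeasure μ]
    (X : ℕ → Ω → Bool) (hmeas : ∀ j, Measurable (X j))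
    (hstat : ∀ j N : ℕ, ∀ v : Fin N → Bool,
      μ {ω | ∀ k : Fin N, X (j + 1 + (k : ℕ)) ω = v k} =
        μ {ω | ∀ k : Fin N, X (1 + (k : ℕ)) ω = v k})
    (p : ℝ) (hp : p ∈ Set.Ioo (0 : ℝ) 1)
    (hbirkhoff : ∀ᵐ ω ∂μ, Filter.Tendsto
      (fun t : ℕ => (∑ j ∈ Finset.Icc 1 t, (if X j ω then (1 : ℝ) else 0)) / t)
      Filter.atTop (nhds p))
    (ζ : ℝ) (hζ : ζ ∈ Set.Ioo (0 : ℝ) (1/3)) :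
    ∃ γ ∈ Set.Ioo (0 : ℝ) (1/2),
      Filter.Tendsto (fun n : ℕ =>
        (μ {ω | ∀ i : ℕ, 1 ≤ i → i ≤ n - ⌊3 * ζ * n⌋₊ →
          γ * ⌊3 * ζ * n⌋₊ ≤
              (∑ j ∈ Finset.Ico i (i + ⌊3 * ζ * n⌋₊), (if X j ω then (1 : ℝ) else 0)) ∧
          (∑ j ∈ Finset.Ico i (i + ⌊3 * ζ * n⌋₊), (if X j ω then (1 : ℝ) else 0)) ≤
              (1 - γ) * ⌊3 * ζ * n⌋₊}).toReal)
        Filter.atTop (nhds 1) :=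
  stationary_process_balanced_windows_general μ X p hp hbirkhoff ζ hζ
end
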